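/- The transformation function trans preserves the relative order of program events: if two program events a, b satisfy (a,b) ∈ <_{comp(t⁺)}, then (a,b) ∈ <_{t'} where t' = trans(comp(t⁺), h', []). -/

import Mathlib

/-!
Precedence of two events in a trace is the same as `[a, b]` being a sublist of it. Every case of
`trans` except (T4) emits only object events, and (T4) copies the program event it reads, so the
program events of `trans t h' r` form exactly the subsequence of program events of `t`; a pair
that is a sublist of the latter is therefore a sublist of the former.
-/

inductive Event (T PS Op Val : Type) : Type
  | step : T → PS → Event T PS Op Val
  | effS : T → PS → Event T PS Op Val
  | inv  : Op → Val → Event T PS Op Val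
  | res  : Op → Val → Event T PS Op Val
  | effO : Op → Val → Event T PS Op Val

namespace Event

variable {T PS Op Val : Type}

/-- `precedes t a b`: `a` occurs at an earlier index than `b` in the trace `t`. -/
def precedes (t : List (Event T PS Op Val)) (a b : Event T PS Op Val) : Prop :=
  ∃ i j, i < j ∧ t[(i : ℕ)]? = some a ∧ t[(j : ℕ)]? = some b

/-- Program events: program steps and their effects. -/
def IsProgEvent : Event T PS Op Val → Prop
  | step _ _ => True
  | effS _ _ => True
  | _ => False

/-- Invocation or response event. -/
def isIR : Event T PS Op Val → Bool
  | inv _ _ => true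
  | res _ _ => true
  | _ => false

/-- Restriction of a trace to its invocation and response events. -/
def restrictIR (t : List (Event T PS Op Val)) : List (Event T PS Op Val) := t.filter isIR

/-- Well-formedness of traces: invocations precede matching responses and effects,
program steps precede their effects, and response/effect outputs agree. -/
def WellFormed (t : List (Event T PS Op Val)) : Prop :=
  (∀ j a out, (t[(j : ℕ)]? = some (res a out) ∨ t[j]? = some (effO a out)) →
      ∃ i inp, i < j ∧ t[i]? = some (inv a inp)) ∧
  (∀ j τ p, t[(j : ℕ)]? = some (effS τ p) → ∃ i, i < j ∧ t[i]? = some (step τ p)) ∧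
  (∀ a outr oute, res a outr ∈ t → effO a oute ∈ t → outr = oute)

/-- `ext t`: the extensions of trace `t` by a sequence of response events. -/
def ext (t : List (Event T PS Op Val)) : Set (List (Event T PS Op Val)) :=
  {u | ∃ tr, u = t ++ tr ∧ (∀ e ∈ tr, ∃ c v, e = res c v) ∧ u.Nodup}

open Classical in
/-- `comp t` removes from `t` every invocation with neither a later response
nor a later operation effect. -/
noncomputable def comp : List (Event T PS Op Val) → List (Event T PS Op Val)
  | [] => []
  | e :: rest =>
    if ∃ a inp, e = inv a inp ∧ ∀ out, res a out ∉ rest ∧ effO a out ∉ rest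
    then comp rest
    else e :: comp rest

/-- `Allows R t` : the (partial) order `R` allows the trace `t`. -/
def Allows (R : Event T PS Op Val → Event T PS Op Val → Prop)
    (t : List (Event T PS Op Val)) : Prop :=
  ∀ a b, R a b → b ∈ t → precedes t a b

/-- The operation order `⪯_t`: pairs `(res c, inv d)` with the response before
the invocation in `t`. -/
def OpOrd (t : List (Event T PS Op Val)) (e e' : Event T PS Op Val) : Prop :=
  (∃ c v, e = res c v) ∧ (∃ d w, e' = inv d w) ∧ precedes t e e'

/-- Atomic history: every invocation is immediately followed by its response and
every response immediately preceded by its invocation. -/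
def Atomic (h : List (Event T PS Op Val)) : Prop :=
  (∀ i a inp, h[(i : ℕ)]? = some (inv a inp) → ∃ out, h[i + 1]? = some (res a out)) ∧
  (∀ i a out, h[(i : ℕ)]? = some (res a out) → ∃ j inp, i = j + 1 ∧ h[j]? = some (inv a inp))

/-- The thread of an object event (invocation or response), if any. -/
def objThread (thread : Op → T) : Event T PS Op Val → Option T
  | inv o _ => some (thread o)
  | res o _ => some (thread o)
  | _ => none

/-- Thread equivalence: equal per-thread subsequences of invocations and responses. -/
def threadEquiv [DecidableEq T] (thread : Op → T) (t h : List (Event T PS Op Val)) : Prop :=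
  ∀ τ : T, t.filter (fun e => decide (objThread thread e = some τ)) =
           h.filter (fun e => decide (objThread thread e = some τ))

open Classical in
/-- The transformation function `trans` of the soundness proof (cases (T1)–(T5)). -/
noncomputable def trans : List (Event T PS Op Val) → List (Event T PS Op Val) →
    List (Event T PS Op Val) → List (Event T PS Op Val)
  | t, h', r =>
    if h5 : ∃ a inp out, h'.head? = some (inv a inp) ∧ inv a inp ∈ r ∧ res a out ∈ t then
      -- (T5)
      let a := h5.choose
      let inp := h5.choose_spec.choose
      let out := h5.choose_spec.choose_spec.choose
      inv a inp :: effO a out :: res a out ::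
        trans t h'.tail.tail (r.eraseP (fun e => decide (e = inv a inp)))
    else
      match t with
      | [] => []
      | .inv a inp :: ts =>
          if h1 : h'.head? = some (inv a inp) ∧ ∃ out, res a out ∈ (inv a inp :: ts) then
            -- (T1)
            inv a inp :: effO a h1.2.choose :: res a h1.2.choose ::
              trans ts h'.tail.tail r
          else
            -- (T2)
            trans ts h' (r ++ [inv a inp])
      | .res _ _ :: ts => trans ts h' r        -- (T3)
      | .effO _ _ :: ts => trans ts h' r       -- (T3)
      | .step s p :: ts => step s p :: trans ts h' r   -- (T4)
      | .effS s p :: ts => effS s p :: trans ts h' r   -- (T4)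
  termination_by t h' r => t.length + h'.length
  decreasing_by
    · obtain ⟨a, inp, out, hh, -, -⟩ := h5
      have hne : h' ≠ [] := by intro hcon; subst hcon; simp at hh
      have h0 : 0 < h'.length := List.length_pos_iff.mpr hne
      simp_wf
      omega
    all_goals simp_wf
    all_goals omega

/-- Atomic-style traces: blocks `[inv a in, eff a out, res a out]` interleaved with
program events, each operation appearing in exactly one block. -/
inductive AtomicStyle : List (Event T PS Op Val) → Prop
  | nil : AtomicStyle []
  | prog {e : Event T PS Op Val} {t : List (Event T PS Op Val)} :
      IsProgEvent e → AtomicStyle t → AtomicStyle (e :: t)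
  | block {a : Op} {inp out : Val} {t : List (Event T PS Op Val)} :
      (∀ v : Val, inv a v ∉ t ∧ res a v ∉ t ∧ effO a v ∉ t) →
      AtomicStyle t →
      AtomicStyle (inv a inp :: effO a out :: res a out :: t)

def isProg : Event T PS Op Val → Bool
  | step _ _ => true
  | effS _ _ => true
  | _ => false

theorem isProg_eq_true {e : Event T PS Op Val} (h : IsProgEvent e) : isProg e = true := by
  cases e <;> simp_all [IsProgEvent, isProg]

theorem precedes_iff_pair_sublist {t : List (Event T PS Op Val)} {a b : Event T PS Op Val} :
    precedes t a b ↔ [a, b].Sublist t := by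
  constructor
  · rintro ⟨i, j, hij, ha, hb⟩
    have ha' : a ∈ t.take j := List.mem_of_getElem? (by rwa [List.getElem?_take, if_pos hij])
    have hb' : b ∈ t.drop j := List.mem_of_getElem? (by rwa [List.getElem?_drop, Nat.add_zero])
    simpa using (List.singleton_sublist.2 ha').append (List.singleton_sublist.2 hb')
  · rw [List.sublist_iff_exists_orderEmbedding_getElem?_eq]
    rintro ⟨f, hf⟩
    exact ⟨f 0, f 1, f.strictMono zero_lt_one, (hf 0).symm, (hf 1).symm⟩

theorem filter_isProg_trans (t h' r : List (Event T PS Op Val)) :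
    (trans t h' r).filter isProg = t.filter isProg := by
  fun_induction trans t h' r <;> simp_all [List.filter_cons, isProg]

end Event

theorem stmt15_general {T PS Op Val : Type}
    (tplus h' : List (Event T PS Op Val)) :
    ∀ a b : Event T PS Op Val, Event.IsProgEvent a → Event.IsProgEvent b →
      Event.precedes (Event.comp tplus) a b →
      Event.precedes (Event.trans (Event.comp tplus) h' []) a b := by
  intro a b ha hb hprec
  rw [Event.precedes_iff_pair_sublist] at hprec ⊢
  have hprog : [a, b].Sublist ((Event.trans (Event.comp tplus) h' []).filter Event.isProg) := by
    rw [Event.filter_isProg_trans]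
    simpa [List.filter_cons, Event.isProg_eq_true ha, Event.isProg_eq_true hb]
      using hprec.filter Event.isProg
  exact hprog.trans List.filter_sublist

/-- `trans` preserves the relative order of program events: if two
program events `a`, `b` satisfy `(a,b) ∈ <_{comp tplus}`, then
`(a,b) ∈ <_{trans (comp tplus) h' []}`. -/
theorem stmt15 {T PS Op Val : Type}
    (tplus h' : List (Event T PS Op Val)) (hnd : tplus.Nodup) :
    ∀ a b : Event T PS Op Val, Event.IsProgEvent a → Event.IsProgEvent b →
      Event.precedes (Event.comp tplus) a b →
      Event.precedes (Event.trans (Event.comp tplus) h' []) a b :=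
  stmt15_general tplus h'
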